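/- arXiv:2502.03308 — 2 statements merged into one kernel-verified Lean document; each statement's English description precedes it below -/
import Mathlib

section
/- If a finite group G is a Frobenius group or a 2-Frobenius group, then Γ(G) is disconnected. -/
/-- The nilpotent neighborhood of `x`: elements `y` such that `⟨x,y⟩` is nilpotent. -/
def nilNbhd {G : Type*} [Group G] (x : G) : Set G :=
  {y | Group.IsNilpotent ↥(Subgroup.closure ({x, y} : Set G))}

/-- The hypercenter of a finite group: the stable term of the upper central series. -/
noncomputable def hypercenter (G : Type*) [Group G] : Subgroup G :=
  upperCentralSeries G (Nat.card G)

instance hypercenter_normal (G : Type*) [Group G] : (hypercenter G).Normal :=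
  inferInstanceAs (Subgroup.upperCentralSeries G (Nat.card G)).Normal

/-- The graph Γ(G): induced subgraph of the nilpotent graph on `G \ Z_∞(G)`. -/
def nilGraph (G : Type*) [Group G] : SimpleGraph {x : G // x ∉ hypercenter G} where
  Adj a b := a ≠ b ∧ Group.IsNilpotent ↥(Subgroup.closure ({a.1, b.1} : Set G))
  symm := ⟨fun a b ⟨h1, h2⟩ => ⟨h1.symm, by rwa [Set.pair_comm]⟩⟩
  loopless := ⟨fun a h => h.1 rfl⟩

/-- The commuting graph on the non-central elements. -/
def commGraph (G : Type*) [Group G] : SimpleGraph {x : G // x ∉ Subgroup.center G} where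
  Adj a b := a ≠ b ∧ a.1 * b.1 = b.1 * a.1
  symm := ⟨fun a b ⟨h1, h2⟩ => ⟨h1.symm, h2.symm⟩⟩
  loopless := ⟨fun a h => h.1 rfl⟩

/-- Diameter of a connected component: diameter of the induced subgraph on its support. -/
noncomputable def compDiam {V : Type*} (Γ : SimpleGraph V) (c : Γ.ConnectedComponent) : ℕ :=
  (Γ.induce c.supp).diam

/-- `H` is a Frobenius complement in `G`. -/
def IsFrobeniusComplement {G : Type*} [Group G] (H : Subgroup G) : Prop :=
  H ≠ ⊥ ∧ H ≠ ⊤ ∧ ∀ g : G, g ∉ H → H ⊓ H.map (MulAut.conj g).toMonoidHom = ⊥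

/-- `G` is a Frobenius group. -/
def IsFrobenius (G : Type*) [Group G] : Prop :=
  ∃ H : Subgroup G, IsFrobeniusComplement H

/-- `K` is the Frobenius kernel corresponding to the complement `H`. -/
def IsFrobeniusKernelOf {G : Type*} [Group G] (K H : Subgroup G) : Prop :=
  IsFrobeniusComplement H ∧
    (K : Set G) = {1} ∪ {x : G | ∀ g : G, x ∉ H.map (MulAut.conj g).toMonoidHom}

/-- `K` is a Frobenius kernel of `G`. -/
def IsFrobeniusKernel {G : Type*} [Group G] (K : Subgroup G) : Prop :=
  ∃ H : Subgroup G, IsFrobeniusKernelOf K H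

/-- `G` is a 2-Frobenius group. -/
def IsTwoFrobenius (G : Type*) [Group G] : Prop :=
  ∃ K L : Subgroup G, ∃ hK : K.Normal, L.Normal ∧ K ≤ L ∧
    IsFrobeniusKernel (K.subgroupOf L) ∧
    (haveI := hK; IsFrobeniusKernel (Subgroup.map (QuotientGroup.mk' K) L))

/-- The Fitting subgroup: the largest normal nilpotent subgroup (of a finite group). -/
def fitting (G : Type*) [Group G] : Subgroup G :=
  sSup {H : Subgroup G | H.Normal ∧ Group.IsNilpotent ↥H}

/-!
A nilpotent subgroup `N` meeting a Frobenius complement `H` nontrivially lies in `H`: otherwise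
the normalizer condition in `N` yields `n ∉ H` normalizing `H ∩ N`, and then `H ∩ H^n ≠ 1`.
Hence in a Frobenius group the neighbours in Γ(G) of a nontrivial element of `H` stay in `H`, so
`H \ 1` is a union of components, while conjugating by an element outside `H` leaves it.

In a 2-Frobenius group take a complement `H` of the Frobenius group `L` with kernel `K`, and
`a ∈ H \ 1`, so `a ∉ K`. If `⟨a, b⟩` is nilpotent then `b ∈ L`: otherwise, in `G/K`, the image
of `b` lies in a conjugate of a complement of `L/K`, which by the above absorbs the nontrivial
image of `a ∈ L/K`, impossible for an element of the kernel. Inside `L` the first argument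
applies again. In both cases the centre, hence the hypercentre, is trivial.
-/

open Subgroup

lemma SimpleGraph.not_preconnected_of_adj_closed {V : Type*} {Γ : SimpleGraph V} {p : V → Prop}
    (hp : ∀ u v, Γ.Adj u v → p u → p v) {u v : V} (hu : p u) (hv : ¬ p v) :
    ¬ Γ.Preconnected := by
  intro hΓ
  obtain ⟨w⟩ := hΓ u v
  induction w with
  | nil => exact hv hu
  | cons h _ ih => exact ih (hp _ _ h hu) hv

section

variable {G G' : Type*} [Group G] [Group G']

lemma isNilpotent_closure_pair_map (f : G →* G') {a b : G}
    (h : Group.IsNilpotent (closure {a, b})) : Group.IsNilpotent (closure {f a, f b}) := by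
  rw [← Set.image_pair, ← MonoidHom.map_closure]
  exact Group.nilpotent_of_surjective _ (f.subgroupMap_surjective _)

lemma isNilpotent_closure_pair_of_subtype {L : Subgroup G} {a b : L}
    (h : Group.IsNilpotent (closure ({(a : G), (b : G)} : Set G))) :
    Group.IsNilpotent (closure {a, b}) := by
  have e := equivMapOfInjective (closure {a, b}) L.subtype L.subtype_injective
  rw [MonoidHom.map_closure, Set.image_pair] at e
  exact @Group.nilpotent_of_mulEquiv _ _ _ _ h e.symm

lemma Subgroup.mem_map_conj_iff {H : Subgroup G} {g x : G} :
    x ∈ H.map (MulAut.conj g).toMonoidHom ↔ g⁻¹ * x * g ∈ H := by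
  rw [mem_map_equiv, MulAut.conj_symm_apply]

lemma hypercenter_eq_bot_of_center_eq_bot (h : center G = ⊥) : hypercenter G = ⊥ := by
  suffices ∀ n, Subgroup.upperCentralSeries G n = ⊥ from this _
  intro n
  induction n with
  | zero => rfl
  | succ n ih =>
    refine eq_bot_iff.2 fun x hx => h ▸ mem_center_iff.2 fun g => ?_
    have := (Subgroup.mem_upperCentralSeries_succ_iff.1 hx) g
    rw [ih, mem_bot, commutatorElement_def] at this
    calc g * x = (x * g * x⁻¹ * g⁻¹) * g * x := by rw [this, one_mul]
      _ = x * g := by group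

lemma center_eq_bot_of_quotient {K L : Subgroup G} [K.Normal] (hKL : K ≤ L)
    (hL : center L = ⊥) (hQ : center (G ⧸ K) = ⊥) : center G = ⊥ := by
  refine eq_bot_iff.2 fun z hz => ?_
  have hzK : z ∈ K := by
    rw [← QuotientGroup.eq_one_iff, ← mem_bot, ← hQ, mem_center_iff]
    intro q
    induction q using QuotientGroup.induction_on with
    | H g => rw [← QuotientGroup.mk_mul, ← QuotientGroup.mk_mul, mem_center_iff.1 hz g]
  have hzL : (⟨z, hKL hzK⟩ : L) ∈ center L :=
    mem_center_iff.2 fun l => Subtype.ext (mem_center_iff.1 hz l)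
  rw [hL, mem_bot] at hzL
  exact congrArg Subtype.val hzL

end

namespace IsFrobeniusComplement

variable {G : Type*} [Group G] {H : Subgroup G}

lemma exists_ne_one (hH : IsFrobeniusComplement H) : ∃ x ∈ H, x ≠ 1 :=
  H.bot_or_exists_ne_one.resolve_left hH.1

lemma exists_notMem (hH : IsFrobeniusComplement H) : ∃ g, g ∉ H := by
  by_contra! h
  exact hH.2.1 (H.eq_top_iff'.2 h)

lemma eq_one_of_mem_of_mem_conj (hH : IsFrobeniusComplement H) {g x : G} (hg : g ∉ H)
    (hx : x ∈ H) (hxg : x ∈ H.map (MulAut.conj g).toMonoidHom) : x = 1 := by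
  rw [← mem_bot, ← hH.2.2 g hg]
  exact ⟨hx, hxg⟩

lemma conj_notMem (hH : IsFrobeniusComplement H) {g x : G} (hg : g ∉ H) (hx : x ∈ H)
    (hx1 : x ≠ 1) : g * x * g⁻¹ ∉ H :=
  fun hgx => hx1 (conj_eq_one_iff.1 (hH.eq_one_of_mem_of_mem_conj hg hgx (mem_map_of_mem _ hx)))

lemma map_conj (hH : IsFrobeniusComplement H) (g : G) :
    IsFrobeniusComplement (H.map (MulAut.conj g).toMonoidHom) := by
  have hinj : Function.Injective (MulAut.conj g).toMonoidHom := (MulAut.conj g).injective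
  have map_map_conj : ∀ t : G,
      (H.map (MulAut.conj g).toMonoidHom).map (MulAut.conj t).toMonoidHom =
        (H.map (MulAut.conj (g⁻¹ * t * g)).toMonoidHom).map (MulAut.conj g).toMonoidHom := by
    intro t
    ext x
    simp only [mem_map_conj_iff]
    group
  refine ⟨?_, ?_, fun t ht => ?_⟩
  · rw [Ne, map_eq_bot_iff_of_injective _ hinj]
    exact hH.1
  · rw [Ne, ← map_top_of_surjective (MulAut.conj g).toMonoidHom (MulAut.conj g).surjective,
      (map_injective hinj).eq_iff]
    exact hH.2.1
  · have htg : g⁻¹ * t * g ∉ H := fun h => ht (mem_map_conj_iff.2 (by simpa [mul_assoc] using h))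
    rw [map_map_conj, ← map_inf _ _ _ hinj, hH.2.2 _ htg, Subgroup.map_bot]

lemma le_of_isNilpotent (hH : IsFrobeniusComplement H) {N : Subgroup G}
    (hN : Group.IsNilpotent N) {x : G} (hxN : x ∈ N) (hxH : x ∈ H) (hx1 : x ≠ 1) : N ≤ H := by
  by_contra hNH
  have hlt : H.subgroupOf N < ⊤ := lt_top_iff_ne_top.2 fun e => hNH (subgroupOf_eq_top.1 e)
  obtain ⟨n, hn, hnH⟩ := SetLike.exists_of_lt (Group.normalizerCondition_of_isNilpotent _ hlt)
  have hnx : (n : G) * x * (n : G)⁻¹ ∈ H := by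
    have := (mem_normalizer_iff.1 hn ⟨x, hxN⟩).1 (mem_subgroupOf.2 hxH)
    simpa [mem_subgroupOf] using this
  exact hH.conj_notMem (fun h => hnH (mem_subgroupOf.2 h)) hxH hx1 hnx

lemma mem_of_isNilpotent_closure_pair (hH : IsFrobeniusComplement H) {a b : G} (ha : a ∈ H)
    (ha1 : a ≠ 1) (hab : Group.IsNilpotent (closure {a, b})) : b ∈ H :=
  hH.le_of_isNilpotent hab (subset_closure (by simp)) ha ha1 (subset_closure (by simp))

lemma center_eq_bot (hH : IsFrobeniusComplement H) : center G = ⊥ := by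
  refine eq_bot_iff.2 fun z hz => mem_bot.2 ?_
  have hconj : ∀ x, z⁻¹ * x * z = x := fun x => by
    rw [mul_assoc, mem_center_iff.1 hz x, inv_mul_cancel_left]
  by_cases hzH : z ∈ H
  · obtain ⟨g, hg⟩ := hH.exists_notMem
    refine hH.eq_one_of_mem_of_mem_conj hg hzH (mem_map_conj_iff.2 ?_)
    rwa [mul_assoc, ← mem_center_iff.1 hz, inv_mul_cancel_left]
  · have hHz : H.map (MulAut.conj z).toMonoidHom = H := by
      ext x
      rw [mem_map_conj_iff, hconj]
    have := hH.2.2 z hzH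
    rw [hHz, inf_idem] at this
    exact absurd this hH.1

end IsFrobeniusComplement

namespace IsFrobeniusKernelOf

variable {G : Type*} [Group G] {K H : Subgroup G}

lemma notMem_conj (hKH : IsFrobeniusKernelOf K H) {x : G} (hx : x ∈ K) (hx1 : x ≠ 1) (g : G) :
    x ∉ H.map (MulAut.conj g).toMonoidHom := by
  have hx' : x ∈ (K : Set G) := hx
  rw [hKH.2] at hx'
  exact hx'.resolve_left hx1 g

lemma exists_mem_conj_of_notMem (hKH : IsFrobeniusKernelOf K H) {x : G} (hx : x ∉ K) :
    ∃ g, x ∈ H.map (MulAut.conj g).toMonoidHom := by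
  by_contra! h
  exact hx (by rw [← SetLike.mem_coe, hKH.2]; exact Or.inr h)

lemma mem_of_isNilpotent_closure_pair (hKH : IsFrobeniusKernelOf K H) {a b : G} (ha : a ∈ K)
    (ha1 : a ≠ 1) (hab : Group.IsNilpotent (closure {a, b})) : b ∈ K := by
  by_contra hb
  obtain ⟨g, hbg⟩ := hKH.exists_mem_conj_of_notMem hb
  have hb1 : b ≠ 1 := fun h => hb (h ▸ K.one_mem)
  rw [Set.pair_comm] at hab
  exact hKH.notMem_conj ha ha1 g
    ((hKH.1.map_conj g).mem_of_isNilpotent_closure_pair hbg hb1 hab)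

end IsFrobeniusKernelOf

lemma mem_map_complement_of_isNilpotent_closure_pair {G : Type*} [Group G] {K L : Subgroup G}
    [K.Normal] (hKL : K ≤ L) {HL : Subgroup L} (hL : IsFrobeniusKernelOf (K.subgroupOf L) HL)
    (hQ : IsFrobeniusKernel (L.map (QuotientGroup.mk' K))) {a : L} (ha : a ∈ HL) (ha1 : a ≠ 1)
    {b : G} (hab : Group.IsNilpotent (closure ({(a : G), b} : Set G))) :
    b ∈ HL.map L.subtype := by
  obtain ⟨_, hQ⟩ := hQ
  have haK : (a : G) ∉ K := fun h =>
    hL.notMem_conj (mem_subgroupOf.2 h) ha1 1 (by simpa [mem_map_conj_iff] using ha)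
  have hbL : b ∈ L := by
    have hb := hQ.mem_of_isNilpotent_closure_pair (mem_map_of_mem _ a.2)
      (by simpa [QuotientGroup.eq_one_iff] using haK) (isNilpotent_closure_pair_map _ hab)
    rwa [← mem_comap, QuotientGroup.comap_map_mk', sup_eq_right.2 hKL] at hb
  exact ⟨⟨b, hbL⟩, hL.1.mem_of_isNilpotent_closure_pair ha ha1
    (isNilpotent_closure_pair_of_subtype hab), rfl⟩

lemma not_preconnected_nilGraph_of_absorbing {G : Type*} [Group G] (hZ : hypercenter G = ⊥)
    (S : Subgroup G)
    (hS : ∀ a b, a ∈ S → a ≠ 1 → Group.IsNilpotent (closure {a, b}) → b ∈ S)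
    {x y : G} (hx : x ∈ S) (hx1 : x ≠ 1) (hy : y ∉ S) : ¬ (nilGraph G).Preconnected := by
  have vertex : ∀ {v : G}, v ≠ 1 → v ∉ hypercenter G := fun hv => by rwa [hZ, mem_bot]
  refine SimpleGraph.not_preconnected_of_adj_closed (p := fun v => v.1 ∈ S)
    (fun u v huv hu => hS _ _ hu (fun h => u.2 (h ▸ one_mem _)) huv.2)
    (u := ⟨x, vertex hx1⟩) (v := ⟨y, vertex fun h => hy (h ▸ S.one_mem)⟩) hx hy

theorem IsFrobenius.not_preconnected_nilGraph {G : Type*} [Group G] (hG : IsFrobenius G) :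
    ¬ (nilGraph G).Preconnected := by
  obtain ⟨H, hH⟩ := hG
  obtain ⟨x, hxH, hx1⟩ := hH.exists_ne_one
  obtain ⟨g, hg⟩ := hH.exists_notMem
  exact not_preconnected_nilGraph_of_absorbing
    (hypercenter_eq_bot_of_center_eq_bot hH.center_eq_bot) H
    (fun _ _ => hH.mem_of_isNilpotent_closure_pair) hxH hx1 (hH.conj_notMem hg hxH hx1)

theorem IsTwoFrobenius.not_preconnected_nilGraph {G : Type*} [Group G] (hG : IsTwoFrobenius G) :
    ¬ (nilGraph G).Preconnected := by
  obtain ⟨K, L, hK, -, hKL, ⟨HL, hL⟩, hQ⟩ := hG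
  have hZ : hypercenter G = ⊥ := by
    obtain ⟨_, hHQ⟩ := hQ
    exact hypercenter_eq_bot_of_center_eq_bot
      (center_eq_bot_of_quotient hKL hL.1.center_eq_bot hHQ.1.center_eq_bot)
  obtain ⟨x, hxH, hx1⟩ := hL.1.exists_ne_one
  obtain ⟨g, hg⟩ := hL.1.exists_notMem
  refine not_preconnected_nilGraph_of_absorbing hZ (HL.map L.subtype) ?_ (mem_map_of_mem _ hxH)
    (by simpa using hx1)
    ((mem_map_iff_mem L.subtype_injective).not.2 (hL.1.conj_notMem hg hxH hx1))
  rintro _ b ⟨a, ha, rfl⟩ ha1 hab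
  exact mem_map_complement_of_isNilpotent_closure_pair hKL hL hQ ha (by simpa using ha1) hab

theorem stmt_12_general (G : Type*) [Group G]
    (h : IsFrobenius G ∨ IsTwoFrobenius G) :
    ¬ (nilGraph G).Preconnected :=
  h.elim IsFrobenius.not_preconnected_nilGraph IsTwoFrobenius.not_preconnected_nilGraph

/-- Frobenius and 2-Frobenius groups have disconnected Γ(G). -/
theorem stmt_12 (G : Type*) [Group G] [Finite G]
    (h : IsFrobenius G ∨ IsTwoFrobenius G) :
    ¬ (nilGraph G).Preconnected :=
  stmt_12_general G h
end

section
/- Let G be a finite group with trivial center. Then Γ(G) is connected if and only if the commuting graph Γ_comm(G) is connected. Moreover, if Γ(G) is connected of diameter k, then the diameter of Γ_comm(G) is at most 2k. -/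
/-!
A commuting pair generates an abelian, hence nilpotent, subgroup, so every edge of the
commuting graph is an edge of Γ(G). Conversely, if `⟨x, y⟩` is nilpotent and nontrivial, it has
a nontrivial centre; any `z ≠ 1` in it commutes with both `x` and `y`, and is non-central in `G`
because `Z(G) = 1`. So every edge of Γ(G) becomes a path of length at most `2` in the commuting
graph. As `Z(G) = 1` also forces `Z_∞(G) = 1`, both graphs live on `G \ {1}`.
-/

namespace SimpleGraph

variable {V W : Type*} {G : SimpleGraph V} {H : SimpleGraph W} {f : V → W} {c : ℕ}

theorem edist_map_le_mul_length (hf : ∀ u v, G.Adj u v → H.edist (f u) (f v) ≤ c)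
    {u v : V} (p : G.Walk u v) : H.edist (f u) (f v) ≤ c * p.length := by
  induction p with
  | nil => simp
  | @cons u w v huw _ ih =>
    calc H.edist (f u) (f v) ≤ H.edist (f u) (f w) + H.edist (f w) (f v) := H.edist_triangle
      _ ≤ c + c * _ := add_le_add (hf u w huw) ih
      _ = c * (Walk.cons huw _).length := by rw [Walk.length_cons]; push_cast; ring

theorem Reachable.map_of_edist_le (hf : ∀ u v, G.Adj u v → H.edist (f u) (f v) ≤ c)
    {u v : V} (h : G.Reachable u v) : H.Reachable (f u) (f v) := by
  obtain ⟨p⟩ := h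
  refine reachable_of_edist_ne_top (ne_top_of_le_ne_top ?_ (edist_map_le_mul_length hf p))
  exact_mod_cast ENat.natCast_ne_top (c * p.length)

theorem Connected.of_edist_le (hf : ∀ u v, G.Adj u v → H.edist (f u) (f v) ≤ c)
    (hsurj : Function.Surjective f) (hG : G.Connected) : H.Connected := by
  have : Nonempty W := hG.nonempty.map f
  refine ⟨fun u' v' => ?_⟩
  obtain ⟨u, rfl⟩ := hsurj u'
  obtain ⟨v, rfl⟩ := hsurj v'
  exact (hG u v).map_of_edist_le hf

theorem diam_le_mul_diam_of_edist_le (hf : ∀ u v, G.Adj u v → H.edist (f u) (f v) ≤ c)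
    (hsurj : Function.Surjective f) (hG : G.ediam ≠ ⊤) : H.diam ≤ c * G.diam := by
  suffices H.ediam ≤ (c * G.diam : ℕ) from ENat.toNat_le_of_le_natCast this
  refine ediam_le_of_edist_le fun u' v' => ?_
  obtain ⟨u, rfl⟩ := hsurj u'
  obtain ⟨v, rfl⟩ := hsurj v'
  obtain ⟨p, hp⟩ := (preconnected_of_ediam_ne_top hG u v).exists_walk_length_eq_dist
  calc H.edist (f u) (f v) ≤ c * p.length := edist_map_le_mul_length hf p
    _ ≤ (c * G.diam : ℕ) := by rw [hp]; exact_mod_cast Nat.mul_le_mul_left c (dist_le_diam hG)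

end SimpleGraph

section Group

variable {G : Type*} [Group G]

theorem Subgroup.upperCentralSeries_eq_bot_of_center_eq_bot (hZ : Subgroup.center G = ⊥)
    (n : ℕ) : upperCentralSeries G n = ⊥ := by
  induction n with
  | zero => rfl
  | succ n ih =>
    rw [← hZ, ← upperCentralSeries_one]
    ext x
    simp only [mem_upperCentralSeries_succ_iff, ih, upperCentralSeries_zero]

theorem isNilpotent_closure_pair_of_commute {x y : G} (h : Commute x y) :
    Group.IsNilpotent (Subgroup.closure ({x, y} : Set G)) := by
  refine ⟨1, Subgroup.upperCentralSeries_one_eq_top_iff.mpr <|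
    Subgroup.isMulCommutative_closure ?_⟩
  simp only [Set.mem_insert_iff, Set.mem_singleton_iff]
  rintro a (rfl | rfl) b (rfl | rfl)
  exacts [rfl, h, h.symm, rfl]

theorem exists_ne_one_commute_of_isNilpotent_closure_pair {x y : G} (hx : x ≠ 1)
    (h : Group.IsNilpotent (Subgroup.closure ({x, y} : Set G))) :
    ∃ z : G, z ≠ 1 ∧ Commute z x ∧ Commute z y := by
  set K := Subgroup.closure ({x, y} : Set G)
  have hxK : x ∈ K := Subgroup.subset_closure (by simp)
  have hyK : y ∈ K := Subgroup.subset_closure (by simp)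
  have : Nontrivial K := ⟨⟨⟨x, hxK⟩, 1, by simpa using hx⟩⟩
  obtain ⟨z, hz1⟩ :=
    Subgroup.ne_bot_iff_exists_ne_one.mp (Group.IsNilpotent.center_ne_bot (G := K))
  refine ⟨z, fun h1 => hz1 (Subtype.ext (Subtype.ext h1)), ?_, ?_⟩
  · exact congrArg Subtype.val (Subgroup.mem_center_iff.mp z.2 ⟨x, hxK⟩).symm
  · exact congrArg Subtype.val (Subgroup.mem_center_iff.mp z.2 ⟨y, hyK⟩).symm

theorem commGraph_edist_le_one_of_commute {a b : {x : G // x ∉ Subgroup.center G}}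
    (h : Commute a.1 b.1) : (commGraph G).edist a b ≤ 1 := by
  rw [SimpleGraph.edist_le_one_iff_adj_or_eq]
  by_cases hab : a = b
  · exact Or.inr hab
  · exact Or.inl ⟨hab, h⟩

theorem commGraph_edist_le_two_of_isNilpotent_closure_pair (hZ : Subgroup.center G = ⊥)
    {a b : {x : G // x ∉ Subgroup.center G}}
    (h : Group.IsNilpotent (Subgroup.closure ({a.1, b.1} : Set G))) :
    (commGraph G).edist a b ≤ 2 := by
  have ha : a.1 ≠ 1 := fun ha => a.2 (ha ▸ Subgroup.one_mem _)
  obtain ⟨z, hz1, hza, hzb⟩ := exists_ne_one_commute_of_isNilpotent_closure_pair ha h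
  let z' : {x : G // x ∉ Subgroup.center G} := ⟨z, by rwa [hZ, Subgroup.mem_bot]⟩
  calc (commGraph G).edist a b ≤ (commGraph G).edist a z' + (commGraph G).edist z' b :=
        SimpleGraph.edist_triangle
    _ ≤ 1 + 1 := add_le_add (commGraph_edist_le_one_of_commute hza.symm)
        (commGraph_edist_le_one_of_commute hzb)
    _ = 2 := one_add_one_eq_two

end Group

/-- For a centerless group, Γ(G) is connected iff the commuting graph is, and the
diameter of the commuting graph is at most twice that of Γ(G). -/
theorem stmt_13 (G : Type*) [Group G] [Finite G] (hZ : Subgroup.center G = ⊥) :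
    ((nilGraph G).Connected ↔ (commGraph G).Connected) ∧
      ∀ k : ℕ, (nilGraph G).Connected → (nilGraph G).diam = k →
        (commGraph G).diam ≤ 2 * k := by
  have hZinf : hypercenter G = ⊥ := Subgroup.upperCentralSeries_eq_bot_of_center_eq_bot hZ _
  let e : {x : G // x ∉ hypercenter G} ≃ {x : G // x ∉ Subgroup.center G} :=
    Equiv.subtypeEquivRight fun x => by rw [hZinf, hZ]
  have nil_to_comm : ∀ a b, (nilGraph G).Adj a b → (commGraph G).edist (e a) (e b) ≤ 2 :=
    fun a b h => commGraph_edist_le_two_of_isNilpotent_closure_pair hZ h.2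
  have comm_to_nil : ∀ u v, (commGraph G).Adj u v →
      (nilGraph G).edist (e.symm u) (e.symm v) ≤ 1 := fun u v h =>
    SimpleGraph.edist_le_one_iff_adj_or_eq.mpr <|
      Or.inl ⟨e.symm.injective.ne h.1, isNilpotent_closure_pair_of_commute h.2⟩
  refine ⟨⟨fun hc => hc.of_edist_le nil_to_comm e.surjective,
    fun hc => hc.of_edist_le comm_to_nil e.symm.surjective⟩, ?_⟩
  rintro k hc rfl
  have := hc.nonempty
  exact SimpleGraph.diam_le_mul_diam_of_edist_le nil_to_comm e.surjective
    (SimpleGraph.connected_iff_ediam_ne_top.mp hc)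
end
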